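/- Let λ > 0 and 0 < a < 1/λ, and let φ be the partly quadratic penalty. If |y| ≥ 1/a, then Θ(y;λ,a) = y, i.e., the minimizer of x ↦ (1/2)(y-x)² + λφ(x;a) equals y itself. -/

import Mathlib

/-!
For `|y| ≥ 1/a` the penalty is at its ceiling `φ y = 1/(2a)`, while for `|x| ≤ 1/a` the deficit
`1/(2a) - φ x` equals `(a/2)(1/a - |x|)²`. Since `1/a - |x| ≤ |y| - |x| ≤ |y - x|` and `aλ < 1`,
the quadratic fidelity term `½(y - x)²` always pays for that deficit, so `x = y` minimizes; and the
firm-threshold formula leaves `y` untouched exactly because `λ ≤ aλ|y|`.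
-/

/-- The minimax concave penalty `φ(x; a)`. -/
noncomputable def mcpPenalty (a x : ℝ) : ℝ :=
  if |x| ≤ 1 / a then |x| - a / 2 * x ^ 2 else 1 / (2 * a)

/-- The firm thresholding operator `Θ(y; λ, a)`. -/
noncomputable def firmThreshold (lam a y : ℝ) : ℝ :=
  Real.sign y * min |y| (max ((|y| - lam) / (1 - a * lam)) 0)

lemma Real.sign_mul_abs_self (y : ℝ) : Real.sign y * |y| = y := by
  rcases lt_trichotomy y 0 with hy | rfl | hy
  · rw [Real.sign_of_neg hy, abs_of_neg hy]; ring
  · simp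
  · rw [Real.sign_of_pos hy, abs_of_pos hy, one_mul]

lemma firmThreshold_eq_self {lam a y : ℝ} (hlam : 0 ≤ lam) (hal : a * lam < 1)
    (hy : 1 ≤ a * |y|) : firmThreshold lam a y = y := by
  have hle : |y| ≤ (|y| - lam) / (1 - a * lam) := by
    rw [le_div_iff₀ (by linarith)]
    nlinarith
  rw [firmThreshold, max_eq_left ((abs_nonneg y).trans hle), min_eq_left hle,
    Real.sign_mul_abs_self]

lemma mcpPenalty_of_inv_le_abs {a x : ℝ} (ha : 0 < a) (hx : 1 / a ≤ |x|) :
    mcpPenalty a x = 1 / (2 * a) := by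
  unfold mcpPenalty
  split_ifs with hc
  · have hxa : |x| = 1 / a := le_antisymm hc hx
    rw [← sq_abs, hxa]
    field_simp
    ring
  · rfl

lemma inv_two_mul_sub_mcpPenalty {a x : ℝ} (ha : a ≠ 0) (hx : |x| ≤ 1 / a) :
    1 / (2 * a) - mcpPenalty a x = a / 2 * (1 / a - |x|) ^ 2 := by
  rw [mcpPenalty, if_pos hx, ← sq_abs x]
  field_simp
  ring

lemma sq_inv_sub_abs_le_sq_sub {a x y : ℝ} (hx : |x| ≤ 1 / a) (hy : 1 / a ≤ |y|) :
    (1 / a - |x|) ^ 2 ≤ (y - x) ^ 2 := by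
  rw [← sq_abs (y - x)]
  exact pow_le_pow_left₀ (by linarith)
    (by linarith [abs_sub_abs_le_abs_sub y x]) 2

lemma mcpPenalty_objective_le {lam a y : ℝ} (hlam : 0 ≤ lam) (ha : 0 < a) (hal : a * lam ≤ 1)
    (hy : 1 / a ≤ |y|) (x : ℝ) :
    1 / 2 * (y - y) ^ 2 + lam * mcpPenalty a y ≤ 1 / 2 * (y - x) ^ 2 + lam * mcpPenalty a x := by
  rw [sub_self, mcpPenalty_of_inv_le_abs ha hy]
  by_cases hx : |x| ≤ 1 / a
  · have hgap := inv_two_mul_sub_mcpPenalty ha.ne' hx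
    have hsq := sq_inv_sub_abs_le_sq_sub hx hy
    have hdeficit : lam * (a / 2 * (1 / a - |x|) ^ 2) ≤ 1 / 2 * (y - x) ^ 2 := by
      calc lam * (a / 2 * (1 / a - |x|) ^ 2) = a * lam / 2 * (1 / a - |x|) ^ 2 := by ring
        _ ≤ 1 / 2 * (1 / a - |x|) ^ 2 := by gcongr
        _ ≤ 1 / 2 * (y - x) ^ 2 := by gcongr
    nlinarith
  · rw [mcpPenalty, if_neg hx]
    nlinarith [sq_nonneg (y - x)]

theorem stmt_12 (lam a : ℝ) (hlam : 0 < lam) (ha : 0 < a) (h : a < 1 / lam)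
    (φ Θ : ℝ → ℝ)
    (hφ : ∀ x, φ x = if |x| ≤ 1 / a then |x| - a / 2 * x ^ 2 else 1 / (2 * a))
    (hΘ : ∀ y, Θ y = Real.sign y * min |y| (max ((|y| - lam) / (1 - a * lam)) 0)) :
    ∀ y : ℝ, 1 / a ≤ |y| →
      Θ y = y ∧ ∀ x : ℝ, 1 / 2 * (y - y) ^ 2 + lam * φ y ≤ 1 / 2 * (y - x) ^ 2 + lam * φ x := by
  obtain rfl : φ = mcpPenalty a := funext hφ
  obtain rfl : Θ = firmThreshold lam a := funext hΘ
  intro y hy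
  have hal : a * lam < 1 := by rwa [lt_div_iff₀ hlam] at h
  have hay : 1 ≤ a * |y| := by rwa [div_le_iff₀ ha, mul_comm] at hy
  exact ⟨firmThreshold_eq_self hlam.le hal hay,
    mcpPenalty_objective_le hlam.le ha hal.le hy⟩
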